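/- arXiv:2503.16192 — 2 statements merged into one kernel-verified Lean document; each statement's English description precedes it below -/
import Mathlib

section
/- Let η ∈ (0, 1/2] with x₂ := 1 - η + √(1 - 2η) < 1. Define f̄_η : (x₂, ∞) → ℝ by f̄_η(b) := (2 - η - b + √(b² + 2(η-1)b + η²))². Then f̄_η is monotonically non-decreasing on (x₂, ∞), and lim_{b→∞} f̄_η(b) = 1; hence f̄_η(b) ≤ 1 for all b ∈ (x₂, ∞). -/
/-!
With `D = b + η - 1` and `c = 1 - 2η`, the radicand is `D² - c` and
`f̄_η(b) = (1 - (D - √(D² - c)))²`. For `D ≥ √c` the gap `D - √(D² - c)` decreases from its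
value `√c ≤ 1` at `D = √c`, and rationalising it to `c / (D + √(D² - c))` shows that it tends
to `0`. Hence `1 - (D - √(D² - c))` is non-negative and increases to `1`, and so does its square.
-/

open Filter Set Topology Real

theorem MonotoneOn.le_of_tendsto_atTop {α β : Type*} [SemilatticeSup α] [Nonempty α]
    [TopologicalSpace β] [Preorder β] [OrderClosedTopology β] {f : α → β} {a b : α} {L : β}
    (hf : MonotoneOn f (Ioi a)) (hlim : Tendsto f atTop (𝓝 L)) (hb : b ∈ Ioi a) : f b ≤ L :=
  ge_of_tendsto hlim <| (eventually_ge_atTop b).mono fun _ hy => hf hb (lt_of_lt_of_le hb hy) hy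

namespace Real

noncomputable def sqrtGap (c D : ℝ) : ℝ := D - √(D ^ 2 - c)

variable {c D : ℝ}

theorem sqrtGap_eq_div (hD : 0 < D) (hcD : c ≤ D ^ 2) :
    sqrtGap c D = c / (D + √(D ^ 2 - c)) := by
  have hpos : 0 < D + √(D ^ 2 - c) := by positivity
  rw [sqrtGap, eq_div_iff hpos.ne']
  nlinarith [sq_sqrt (sub_nonneg.mpr hcD)]

theorem antitoneOn_sqrtGap (hc : 0 ≤ c) : AntitoneOn (sqrtGap c) (Ici √c) := by
  intro a ha b hb hab
  have ha0 : 0 ≤ a := (sqrt_nonneg c).trans ha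
  have hca : c ≤ a ^ 2 := (sqrt_le_left ha0).mp ha
  have hsa : √(a ^ 2 - c) ≤ a := (sqrt_le_left ha0).mpr (by linarith)
  have hshift : √(a ^ 2 - c) + (b - a) ≤ √(b ^ 2 - c) := by
    apply le_sqrt_of_sq_le
    nlinarith [sq_sqrt (sub_nonneg.mpr hca), mul_nonneg (sub_nonneg.mpr hab) (sub_nonneg.mpr hsa)]
  simp only [sqrtGap]
  linarith

theorem sqrtGap_le_sqrt (hc : 0 ≤ c) (hD : √c ≤ D) : sqrtGap c D ≤ √c := by
  simpa [sqrtGap, sq_sqrt hc] using antitoneOn_sqrtGap hc (le_refl √c) hD hD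

theorem tendsto_sqrtGap_atTop : Tendsto (sqrtGap c) atTop (𝓝 0) := by
  have hden : Tendsto (fun D => D + √(D ^ 2 - c)) atTop atTop :=
    tendsto_atTop_mono (fun D => le_add_of_nonneg_right (sqrt_nonneg _)) tendsto_id
  refine (hden.const_div_atTop c).congr' ?_
  filter_upwards [eventually_gt_atTop 0, (tendsto_pow_atTop two_ne_zero).eventually_ge_atTop c]
    with D hD hcD
  exact (sqrtGap_eq_div hD hcD).symm

theorem monotoneOn_one_sub_sqrtGap_sq (hc₀ : 0 ≤ c) (hc₁ : c ≤ 1) :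
    MonotoneOn (fun D => (1 - sqrtGap c D) ^ 2) (Ici √c) := fun _ ha _ hb hab =>
  pow_le_pow_left₀ (sub_nonneg.mpr ((sqrtGap_le_sqrt hc₀ ha).trans (sqrt_le_one.mpr hc₁)))
    (sub_le_sub_left (antitoneOn_sqrtGap hc₀ ha hb hab) 1) 2

theorem tendsto_one_sub_sqrtGap_sq_atTop :
    Tendsto (fun D => (1 - sqrtGap c D) ^ 2) atTop (𝓝 1) := by
  simpa using (tendsto_sqrtGap_atTop.const_sub 1).pow 2

end Real

theorem stmt_5_general (η : ℝ) (hη : 0 < η) (hη' : η ≤ 1/2)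
    (x₂ : ℝ) (hx₂ : x₂ = 1 - η + Real.sqrt (1 - 2*η))
    (f : ℝ → ℝ)
    (hf : ∀ b : ℝ, f b = (2 - η - b + Real.sqrt (b^2 + 2*(η-1)*b + η^2))^2) :
    MonotoneOn f (Set.Ioi x₂) ∧
    Filter.Tendsto f Filter.atTop (nhds 1) ∧
    ∀ b ∈ Set.Ioi x₂, f b ≤ 1 := by
  have hf_comp : f = (fun D => (1 - sqrtGap (1 - 2 * η) D) ^ 2) ∘ (· + (η - 1)) := by
    ext b
    rw [hf, Function.comp_apply, sqrtGap,
      show b ^ 2 + 2 * (η - 1) * b + η ^ 2 = (b + (η - 1)) ^ 2 - (1 - 2 * η) by ring]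
    ring
  have hmono : MonotoneOn f (Ioi x₂) := by
    rw [hf_comp]
    refine (monotoneOn_one_sub_sqrtGap_sq (by linarith) (by linarith)).comp
      ((monotone_id.add_const _).monotoneOn _) fun b hb => ?_
    rw [mem_Ioi, hx₂] at hb
    rw [mem_Ici]
    linarith
  have hlim : Tendsto f atTop (𝓝 1) := by
    rw [hf_comp]
    exact tendsto_one_sub_sqrtGap_sq_atTop.comp (tendsto_atTop_add_const_right _ _ tendsto_id)
  exact ⟨hmono, hlim, fun b hb => hmono.le_of_tendsto_atTop hlim hb⟩

/-- For η ∈ (0,1/2] with x₂ := 1 - η + √(1-2η) < 1, the function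
f̄_η(b) := (2 - η - b + √(b² + 2(η-1)b + η²))² is monotonically non-decreasing on (x₂, ∞),
tends to 1 as b → ∞, and hence f̄_η(b) ≤ 1 for all b > x₂. -/
theorem stmt_5 (η : ℝ) (hη : 0 < η) (hη' : η ≤ 1/2)
    (x₂ : ℝ) (hx₂ : x₂ = 1 - η + Real.sqrt (1 - 2*η)) (hx₂' : x₂ < 1)
    (f : ℝ → ℝ)
    (hf : ∀ b : ℝ, f b = (2 - η - b + Real.sqrt (b^2 + 2*(η-1)*b + η^2))^2) :
    MonotoneOn f (Set.Ioi x₂) ∧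
    Filter.Tendsto f Filter.atTop (nhds 1) ∧
    ∀ b ∈ Set.Ioi x₂, f b ≤ 1 :=
  stmt_5_general η hη hη' x₂ hx₂ f hf
end

section
/- Let 0 = λ_N < λ_{N-1} ≤ ... ≤ λ_1 be the eigenvalues of the Laplacian L of a connected undirected graph on N ≥ 2 vertices, set b_n := λ_n/λ_1, ϖ = 1/2, γ = 1/λ_1, and for η ∈ (0,1) define p_n := 2 - η - b_n, q_n := b_n/2 + η - 1, and ϱ(η) := max{ max_{1 ≤ n ≤ N-1} |p_n + √(p_n² + 4q_n)|/2 , 1-η }, where for negative p_n²+4q_n the term |p_n + √(p_n²+4q_n)|/2 is interpreted as the modulus of the complex root. Then 0 < ϱ(η) < 1 for all η ∈ (0,1). -/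
/-- Let 0 = λ_N < λ_{N-1} ≤ ... ≤ λ_1 be the Laplacian eigenvalues of a connected
graph, b_n := λ_n/λ_1, and for η ∈ (0,1) set p_n := 2 - η - b_n, q_n := b_n/2 + η - 1 (i.e.
ϖ = 1/2, γ = 1/λ_1).  With ρ_n := |p_n + √(p_n²+4q_n)|/2 when the discriminant is nonnegative
and ρ_n := √(-q_n) (the modulus of the complex roots) otherwise, and
ϱ(η) := max{max_{1 ≤ n ≤ N-1} ρ_n, 1-η}, one has 0 < ϱ(η) < 1. -/
theorem stmt_16 (N : ℕ) (hN : 2 ≤ N) (lam : ℕ → ℝ)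
    (hmono : ∀ m n : ℕ, 1 ≤ m → m ≤ n → n ≤ N → lam n ≤ lam m)
    (hlamN : lam N = 0) (hpos : 0 < lam (N - 1))
    (b : ℕ → ℝ) (hb : ∀ n, b n = lam n / lam 1)
    (η : ℝ) (hη : 0 < η) (hη' : η < 1)
    (p q ρ : ℕ → ℝ)
    (hp : ∀ n, p n = 2 - η - b n) (hq : ∀ n, q n = b n / 2 + η - 1)
    (hρ : ∀ n, ρ n = if 0 ≤ (p n)^2 + 4 * q n
        then |p n + Real.sqrt ((p n)^2 + 4 * q n)| / 2
        else Real.sqrt (-(q n)))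
    (hne : (Finset.Icc 1 (N - 1)).Nonempty)
    (ϱ : ℝ) (hϱ : ϱ = max ((Finset.Icc 1 (N - 1)).sup' hne ρ) (1 - η)) :
    0 < ϱ ∧ ϱ < 1 := by
  have hN1 : 1 ≤ N - 1 := by omega
  have hlam1 : 0 < lam 1 := lt_of_lt_of_le hpos (hmono 1 (N-1) le_rfl hN1 (by omega))
  constructor
  · rw [hϱ]
    exact lt_of_lt_of_le (by linarith) (le_max_right _ _)
  · rw [hϱ]
    apply max_lt _ (by linarith)
    rw [Finset.sup'_lt_iff]
    intro n hn
    rw [Finset.mem_Icc] at hn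
    have hbn1 : b n ≤ 1 := by
      rw [hb]
      exact div_le_one_of_le₀ (hmono 1 n le_rfl hn.1 (by omega)) hlam1.le
    have hbn0 : 0 < b n :=
      (hb n) ▸ div_pos (lt_of_lt_of_le hpos (hmono n (N-1) hn.1 hn.2 (by omega))) hlam1
    rw [hρ]
    split_ifs with hD
    · have hp' : 0 < p n := by rw [hp]; linarith
      have hD' : (p n)^2 + 4*q n < (η + b n)^2 := by rw [hp, hq]; nlinarith
      have hsq : Real.sqrt ((p n)^2 + 4*q n) < η + b n := by
        rw [show η + b n = Real.sqrt ((η + b n)^2) from (Real.sqrt_sq (by linarith)).symm]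
        exact Real.sqrt_lt_sqrt hD hD'
      rw [abs_of_nonneg (by positivity)]
      rw [hp] at hsq ⊢
      linarith
    · rw [Real.sqrt_lt' one_pos, hq]
      linarith
end
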